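/- Let c ≥ 2 + ln 2 and define ε* = 2/(c + √(c²-4)) and g(ε) = ε^{-1}·D^{ε/(1-ε)} where D = e^{c-2} (so ln D = c - 2). Then ε* ∈ (0, 1/2), ε* minimizes g on (0, 1/2], and g(ε*) ≤ c·e. -/

import Mathlib

/-!
`ε*` is the smaller root of `ε² - cε + 1 = 0`, equivalently of `ε (c - 2) = (1 - ε)²`, which is
the critical-point equation of `g(ε) = ε⁻¹ exp((c - 2) ε/(1 - ε))`. At that root the exponent
equals `1 - ε*`, and the tangent-line bound `exp x ≥ 1 + x` at `x = 1 - ε*` reduces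
`g(ε*) ≤ g(ε)` to `(ε - ε*)² ≥ 0`. Finally `c ε* = ε*² + 1 ≥ 1 ≥ exp(-ε*)` gives `g(ε*) ≤ c e`.
-/

open Real

/-- The smaller root of `x² - c x + 1`, written without cancellation. -/
noncomputable def smallRoot (c : ℝ) : ℝ := 2 / (c + √(c ^ 2 - 4))

section smallRoot

variable {c : ℝ}

lemma add_sqrt_sq_sub_four_pos (hc : 2 ≤ c) : 0 < c + √(c ^ 2 - 4) := by
  positivity

lemma smallRoot_pos (hc : 2 ≤ c) : 0 < smallRoot c :=
  div_pos two_pos (add_sqrt_sq_sub_four_pos hc)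

lemma smallRoot_sq_sub_mul_add_one (hc : 2 ≤ c) :
    smallRoot c ^ 2 - c * smallRoot c + 1 = 0 := by
  have hs : √(c ^ 2 - 4) ^ 2 = c ^ 2 - 4 := sq_sqrt (by nlinarith)
  have hpos := add_sqrt_sq_sub_four_pos hc
  rw [smallRoot]
  field_simp
  linear_combination hs

lemma smallRoot_lt_half (hc : 5 / 2 < c) : smallRoot c < 1 / 2 := by
  have hs : √(c ^ 2 - 4) ^ 2 = c ^ 2 - 4 := sq_sqrt (by nlinarith)
  have hs0 : 0 < √(c ^ 2 - 4) := sqrt_pos.mpr (by nlinarith)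
  rw [smallRoot, div_lt_div_iff₀ (add_sqrt_sq_sub_four_pos (by linarith)) two_pos]
  nlinarith

end smallRoot

section criticalPoint

variable {a e : ℝ}

lemma mul_div_one_sub_eq_of_mul_eq_sq (he : e < 1) (hcrit : e * a = (1 - e) ^ 2) :
    a * (e / (1 - e)) = 1 - e := by
  rw [mul_div_assoc', div_eq_iff (by linarith)]
  linear_combination hcrit

lemma inv_mul_exp_le_of_mul_eq_sq (he0 : 0 < e) (he1 : e < 1)
    (hcrit : e * a = (1 - e) ^ 2) {ε : ℝ} (hε0 : 0 < ε) (hε1 : ε < 1) :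
    e⁻¹ * exp (a * (e / (1 - e))) ≤ ε⁻¹ * exp (a * (ε / (1 - ε))) := by
  set A := a * (ε / (1 - ε)) with hA
  have hA_mul : A * (1 - ε) = a * ε := by
    rw [hA]; field_simp [(by linarith : (1 : ℝ) - ε ≠ 0)]
  have hsq : e * (A + e) * (1 - ε) - ε * (1 - ε) = (ε - e) ^ 2 := by
    linear_combination e * hA_mul + ε * hcrit
  have hε_le : ε ≤ e * (A + e) := by nlinarith [sq_nonneg (ε - e)]
  have htangent : exp (1 - e) * (A + e) ≤ exp A := by
    calc exp (1 - e) * (A + e) = exp (1 - e) * (A - (1 - e) + 1) := by ring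
      _ ≤ exp (1 - e) * exp (A - (1 - e)) := by gcongr; exact add_one_le_exp _
      _ = exp A := by rw [← exp_add, add_sub_cancel]
  rw [mul_div_one_sub_eq_of_mul_eq_sq he1 hcrit, inv_mul_eq_div, inv_mul_eq_div,
    div_le_div_iff₀ he0 hε0]
  calc exp (1 - e) * ε ≤ exp (1 - e) * (e * (A + e)) := by gcongr
    _ = exp (1 - e) * (A + e) * e := by ring
    _ ≤ exp A * e := by gcongr

end criticalPoint

lemma inv_mul_exp_one_sub_le {c e : ℝ} (he : 0 < e) (hroot : e ^ 2 - c * e + 1 = 0) :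
    e⁻¹ * exp (1 - e) ≤ c * exp 1 := by
  have hexp : exp (-e) ≤ c * e := by
    calc exp (-e) ≤ 1 := exp_le_one_iff.mpr (by linarith)
      _ ≤ c * e := by nlinarith
  rw [sub_eq_add_neg, exp_add, inv_mul_eq_div, div_le_iff₀ he]
  calc exp 1 * exp (-e) ≤ exp 1 * (c * e) := by gcongr
    _ = c * exp 1 * e := by ring

theorem stmt17 (c : ℝ) (hc : 2 + Real.log 2 ≤ c)
    (D : ℝ) (hD : D = Real.exp (c - 2))
    (εs : ℝ) (hεs : εs = 2 / (c + Real.sqrt (c ^ 2 - 4)))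
    (g : ℝ → ℝ) (hg : g = fun ε : ℝ => ε⁻¹ * D ^ (ε / (1 - ε))) :
    εs ∈ Set.Ioo (0 : ℝ) (1 / 2)
      ∧ (∀ ε ∈ Set.Ioc (0 : ℝ) (1 / 2), g εs ≤ g ε)
      ∧ g εs ≤ c * Real.exp 1 := by
  have hc' : 5 / 2 < c := by linarith [log_two_gt_d9]
  have hεs' : εs = smallRoot c := hεs
  have hε0 : 0 < εs := hεs' ▸ smallRoot_pos (by linarith)
  have hε_half : εs < 1 / 2 := hεs' ▸ smallRoot_lt_half hc'
  have hroot : εs ^ 2 - c * εs + 1 = 0 := hεs' ▸ smallRoot_sq_sub_mul_add_one (by linarith)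
  have hcrit : εs * (c - 2) = (1 - εs) ^ 2 := by linear_combination -hroot
  have hg_exp : ∀ ε, g ε = ε⁻¹ * exp ((c - 2) * (ε / (1 - ε))) := by
    intro ε; rw [hg, hD, exp_mul]
  refine ⟨⟨hε0, hε_half⟩, fun ε ⟨hε0', hε_le⟩ => ?_, ?_⟩
  · rw [hg_exp, hg_exp]
    exact inv_mul_exp_le_of_mul_eq_sq hε0 (by linarith) hcrit hε0' (by linarith)
  · rw [hg_exp, mul_div_one_sub_eq_of_mul_eq_sq (by linarith) hcrit]
    exact inv_mul_exp_one_sub_le hε0 hroot
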